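/- arXiv:2502.11964 — 8 statements merged into one kernel-verified Lean document; each statement's English description precedes it below -/
import Mathlib

section
/- Let gas be a GCM satisfying Easy Gas Estimation, i.e., gas_{T∪{tx}}(tx) does not depend on T (write gas(tx)). Suppose the makespan function v satisfies: for any two transactions tx, tx' with K(tx) ∩ K(tx') = ∅, v({tx, tx'}) = max(t(tx), t(tx')), and for any two transactions with K(tx) ∩ K(tx') ≠ ∅, v({tx, tx'}) = t(tx) + t(tx'). If gas additionally satisfies Scheduling Monotonicity with respect to v, then gas is a constant mechanism: gas(tx1) = gas(tx2) for all transactions tx1, tx2. -/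
/-!
If `a` and `b` have disjoint key sets, take `c` with the keys of `b` and running time
`t a + t b`. Next to `c`, the transaction `a` runs in parallel (makespan `t c`) while `b`
conflicts (makespan `t b + t c`), so Scheduling Monotonicity together with Easy Gas Estimation
gives `gas a ≤ gas b`; by symmetry the two gas values are equal. Any two transactions are
key-disjoint from a transaction on a fresh key, which the infinitude of keys provides.
-/

namespace GasMechanism

variable {Key Tx : Type}

theorem exists_disjoint_keys [Infinite Key] {t : Tx → ℝ} {keys : Tx → Finset Key}
    (hrich : ∀ (τ : ℝ) (K : Finset Key), 0 < τ → K.Nonempty → ∃ tx, t tx = τ ∧ keys tx = K)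
    (S : Finset Key) : ∃ c, Disjoint (keys c) S := by
  obtain ⟨k, hk⟩ := Infinite.exists_notMem_finset S
  obtain ⟨c, -, hc⟩ := hrich 1 {k} one_pos (Finset.singleton_nonempty k)
  exact ⟨c, hc ▸ Finset.disjoint_singleton_left.mpr hk⟩

variable [DecidableEq Tx]

theorem makespan_pair_lt [DecidableEq Key] {t : Tx → ℝ} {keys : Tx → Finset Key}
    {v : Finset Tx → ℝ}
    (hvdisj : ∀ tx tx' : Tx, tx ≠ tx' → keys tx ∩ keys tx' = ∅ →
      v {tx, tx'} = max (t tx) (t tx'))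
    (hvconf : ∀ tx tx' : Tx, tx ≠ tx' → keys tx ∩ keys tx' ≠ ∅ →
      v {tx, tx'} = t tx + t tx')
    {a b c : Tx} (hta : 0 < t a) (htb : 0 < t b) (hb : (keys b).Nonempty)
    (hab : Disjoint (keys a) (keys b)) (htc : t c = t a + t b) (hkc : keys c = keys b) :
    a ≠ c ∧ b ≠ c ∧ v {a, c} < v {b, c} := by
  have hac : a ≠ c := by
    rintro rfl
    rw [hkc, Finset.disjoint_self_iff_empty] at hab
    exact hb.ne_empty hab
  have hbc : b ≠ c := by
    rintro rfl
    linarith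
  refine ⟨hac, hbc, ?_⟩
  rw [hvdisj a c hac (hkc ▸ Finset.disjoint_iff_inter_eq_empty.mp hab),
    hvconf b c hbc (by rw [hkc, Finset.inter_self]; exact hb.ne_empty), htc,
    max_eq_right (by linarith)]
  linarith

theorem gas_singleton_le_of_makespan_lt {v : Finset Tx → ℝ} {gas : Finset Tx → Tx → ℝ}
    (heasy : ∀ (T1 T2 : Finset Tx) (tx : Tx), gas (insert tx T1) tx = gas (insert tx T2) tx)
    (hsched : ∀ (T : Finset Tx) (tx1 tx2 : Tx), tx1 ∉ T → tx2 ∉ T →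
      v (insert tx1 T) < v (insert tx2 T) → gas (insert tx1 T) tx1 ≤ gas (insert tx2 T) tx2)
    {a b c : Tx} (hac : a ≠ c) (hbc : b ≠ c) (hv : v {a, c} < v {b, c}) :
    gas {a} a ≤ gas {b} b :=
  calc gas {a} a = gas {a, c} a := heasy ∅ {c} a
    _ ≤ gas {b, c} b := hsched {c} a b (by simpa using hac) (by simpa using hbc) hv
    _ = gas {b} b := heasy {c} ∅ b

end GasMechanism

open GasMechanism in
/-- A GCM satisfying Easy Gas Estimation together with
Scheduling Monotonicity (with respect to a makespan function `v` behaving as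
described on two-element sets) must be a constant mechanism. -/
theorem easy_gas_estimation_and_scheduling_monotonicity_implies_constant
    {Key Tx : Type} [Infinite Key] [DecidableEq Key] [DecidableEq Tx]
    (t : Tx → ℝ) (keys : Tx → Finset Key)
    (htpos : ∀ tx, 0 < t tx) (hKne : ∀ tx, (keys tx).Nonempty)
    -- richness: every admissible pair `(τ, K)` is realized by some transaction
    (hrich : ∀ (τ : ℝ) (K : Finset Key), 0 < τ → K.Nonempty →
      ∃ tx, t tx = τ ∧ keys tx = K)
    (v : Finset Tx → ℝ)
    -- two transactions with disjoint key sets can be run in parallel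
    (hvdisj : ∀ tx tx' : Tx, tx ≠ tx' → keys tx ∩ keys tx' = ∅ →
      v {tx, tx'} = max (t tx) (t tx'))
    -- two conflicting transactions must be run sequentially
    (hvconf : ∀ tx tx' : Tx, tx ≠ tx' → keys tx ∩ keys tx' ≠ ∅ →
      v {tx, tx'} = t tx + t tx')
    (gas : Finset Tx → Tx → ℝ)
    -- Easy Gas Estimation: gas_{T∪{tx}}(tx) does not depend on T
    (heasy : ∀ (T1 T2 : Finset Tx) (tx : Tx),
      gas (insert tx T1) tx = gas (insert tx T2) tx)
    -- Scheduling Monotonicity with respect to v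
    (hsched : ∀ (T : Finset Tx) (tx1 tx2 : Tx), tx1 ∉ T → tx2 ∉ T →
      v (insert tx1 T) < v (insert tx2 T) →
      gas (insert tx1 T) tx1 ≤ gas (insert tx2 T) tx2) :
    -- gas is a constant mechanism
    ∀ tx1 tx2 : Tx, gas {tx1} tx1 = gas {tx2} tx2 := by
  have hle : ∀ a b, Disjoint (keys a) (keys b) → gas {a} a ≤ gas {b} b := by
    intro a b hab
    obtain ⟨c, htc, hkc⟩ := hrich (t a + t b) (keys b) (add_pos (htpos a) (htpos b)) (hKne b)
    obtain ⟨hac, hbc, hv⟩ :=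
      makespan_pair_lt hvdisj hvconf (htpos a) (htpos b) (hKne b) hab htc hkc
    exact gas_singleton_le_of_makespan_lt heasy hsched hac hbc hv
  intro tx1 tx2
  obtain ⟨c, hc⟩ := exists_disjoint_keys hrich (keys tx1 ∪ keys tx2)
  rw [Finset.disjoint_union_right] at hc
  calc gas {tx1} tx1 = gas {c} c := (hle c tx1 hc.1).antisymm' (hle tx1 c hc.1.symm)
    _ = gas {tx2} tx2 := (hle c tx2 hc.2).antisymm (hle tx2 c hc.2.symm)
end

section
/- No GCM can satisfy both Easy Gas Estimation and Efficiency. Precisely: suppose the makespan function v satisfies v({tx}) = t(tx) for every transaction tx, and v({tx1, tx2}) = max(t(tx1), t(tx2)) for any two transactions with disjoint storage key sets. Then there is no GCM gas such that gas_{T∪{tx}}(tx) does not depend on T (Easy Gas Estimation) and the sum over tx in T of gas_T(tx) equals v(T) for every finite set T of transactions (Efficiency). -/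
/-! Together, the two axioms make every transaction pay its stand-alone makespan `v {tx}` in
every block, so `v` would be additive on pairs. But two unit-time transactions on disjoint
keys run in parallel: their pair has makespan `1`, not `2`. -/

open Finset

section GasCostMechanism

variable {Tx : Type} [DecidableEq Tx]

def EasyGasEstimation (gas : Finset Tx → Tx → ℝ) : Prop :=
  ∀ (T₁ T₂ : Finset Tx) (tx : Tx), gas (insert tx T₁) tx = gas (insert tx T₂) tx

def IsEfficient (gas : Finset Tx → Tx → ℝ) (v : Finset Tx → ℝ) : Prop :=
  ∀ T : Finset Tx, ∑ tx ∈ T, gas T tx = v T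

variable {gas : Finset Tx → Tx → ℝ} {v : Finset Tx → ℝ}

theorem EasyGasEstimation.gas_insert_self (hest : EasyGasEstimation gas)
    (heff : IsEfficient gas v) (T : Finset Tx) (tx : Tx) :
    gas (insert tx T) tx = v {tx} := by
  rw [hest T ∅ tx, ← heff {tx}, insert_empty, sum_singleton]

theorem EasyGasEstimation.makespan_pair (hest : EasyGasEstimation gas)
    (heff : IsEfficient gas v) {a b : Tx} (hab : a ≠ b) :
    v {a, b} = v {a} + v {b} := by
  rw [← heff {a, b}, sum_pair hab, hest.gas_insert_self heff, pair_comm,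
    hest.gas_insert_self heff]

end GasCostMechanism

theorem no_gcm_with_easy_gas_estimation_and_efficiency_general
    {Key Tx : Type} [Infinite Key] [DecidableEq Key] [DecidableEq Tx]
    (t : Tx → ℝ) (keys : Tx → Finset Key)
    -- richness: every admissible pair `(τ, K)` is realized by some transaction
    (hrich : ∀ (τ : ℝ) (K : Finset Key), 0 < τ → K.Nonempty →
      ∃ tx, t tx = τ ∧ keys tx = K)
    (v : Finset Tx → ℝ)
    (hsing : ∀ tx : Tx, v {tx} = t tx)
    (hpair : ∀ tx1 tx2 : Tx, tx1 ≠ tx2 → keys tx1 ∩ keys tx2 = ∅ →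
      v {tx1, tx2} = max (t tx1) (t tx2)) :
    ¬ ∃ gas : Finset Tx → Tx → ℝ,
        -- Easy Gas Estimation: gas_{T∪{tx}}(tx) does not depend on T
        (∀ (T1 T2 : Finset Tx) (tx : Tx),
          gas (insert tx T1) tx = gas (insert tx T2) tx) ∧
        -- Efficiency
        (∀ T : Finset Tx, ∑ tx ∈ T, gas T tx = v T) := by
  rintro ⟨gas, hest, heff⟩
  obtain ⟨k₁, k₂, hk⟩ := exists_pair_ne Key
  obtain ⟨tx₁, ht₁, hK₁⟩ := hrich 1 {k₁} one_pos (singleton_nonempty _)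
  obtain ⟨tx₂, ht₂, hK₂⟩ := hrich 1 {k₂} one_pos (singleton_nonempty _)
  have hne : tx₁ ≠ tx₂ := fun h => hk (by simpa [h, hK₂] using hK₁.symm)
  have hdisj : keys tx₁ ∩ keys tx₂ = ∅ := by
    rw [hK₁, hK₂, singleton_inter_of_notMem (by simpa using hk)]
  have hadd := EasyGasEstimation.makespan_pair hest heff hne
  rw [hpair tx₁ tx₂ hne hdisj, hsing, hsing, ht₁, ht₂] at hadd
  norm_num at hadd

/-- No GCM can satisfy both Easy Gas Estimation and Efficiency,
given that the makespan function `v` satisfies `v({tx}) = t(tx)` and equals the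
maximum of the two times on pairs of transactions with disjoint key sets. -/
theorem no_gcm_with_easy_gas_estimation_and_efficiency
    {Key Tx : Type} [Infinite Key] [DecidableEq Key] [DecidableEq Tx]
    (t : Tx → ℝ) (keys : Tx → Finset Key)
    (htpos : ∀ tx, 0 < t tx) (hKne : ∀ tx, (keys tx).Nonempty)
    -- richness: every admissible pair `(τ, K)` is realized by some transaction
    (hrich : ∀ (τ : ℝ) (K : Finset Key), 0 < τ → K.Nonempty →
      ∃ tx, t tx = τ ∧ keys tx = K)
    (v : Finset Tx → ℝ)
    (hsing : ∀ tx : Tx, v {tx} = t tx)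
    (hpair : ∀ tx1 tx2 : Tx, tx1 ≠ tx2 → keys tx1 ∩ keys tx2 = ∅ →
      v {tx1, tx2} = max (t tx1) (t tx2)) :
    ¬ ∃ gas : Finset Tx → Tx → ℝ,
        -- Easy Gas Estimation: gas_{T∪{tx}}(tx) does not depend on T
        (∀ (T1 T2 : Finset Tx) (tx : Tx),
          gas (insert tx T1) tx = gas (insert tx T2) tx) ∧
        -- Efficiency
        (∀ T : Finset Tx, ∑ tx ∈ T, gas T tx = v T) :=
  no_gcm_with_easy_gas_estimation_and_efficiency_general t keys hrich v hsing hpair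
end

section
/- The Banzhaf GCM does not satisfy Efficiency: there exist a makespan function v satisfying (S1)–(S4) and a finite set T of transactions such that the sum over tx in T of gas^B_T(tx) is not equal to v(T). In particular, for T = {tx1, tx2, tx3} with tx1 ≃ (1,{k1}), tx2 ≃ (1,{k1}), tx3 ≃ (1,{k2}) and v given by the optimal scheduler on at least 2 threads (so v of every nonempty subset not containing both tx1 and tx2 equals 1, and v({tx1,tx2}) = v(T) = 2, v(∅) = 0), the Banzhaf gas values are 3/4, 3/4, 1/4 and sum to 7/4 ≠ 2 = v(T). -/
/-- The Banzhaf GCM: `gas^B_T(tx) = (1/2^{n−1}) Σ_{S ⊆ T\{tx}} [v(S∪{tx}) − v(S)]`. -/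
noncomputable def banzhafGas {Tx : Type} [DecidableEq Tx]
    (v : Finset Tx → ℝ) (T : Finset Tx) (tx : Tx) : ℝ :=
  (1 / 2 ^ (T.card - 1)) * ∑ S ∈ (T.erase tx).powerset, (v (insert tx S) - v S)

/-- Execution times of the three transactions `tx1 ≃ (1,{k1})`,
`tx2 ≃ (1,{k1})`, `tx3 ≃ (1,{k2})`. -/
noncomputable def tTx5 : Fin 3 → ℝ := ![1, 1, 1]

/-- Storage key sets of the three transactions (keys `k1 = 0`, `k2 = 1`). -/
def keysTx5 : Fin 3 → Finset (Fin 2) := ![{0}, {0}, {1}]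

/-!
Take for `v` the maximal key load: the largest total execution time of the transactions of a set
that share a storage key. Transactions on a common key must run one after another, so this is a
lower bound for every schedule, and on two threads it is attained on every subset of the example.
The Banzhaf weights `1 / 2^(n-1)` do not make the marginal contributions telescope to `v(T)` as
the Shapley weights do: for the example they add up to `7/4`.
-/

section KeyLoad

variable {Tx Key : Type*} [DecidableEq Key] (t : Tx → ℝ) (K : Tx → Finset Key)

noncomputable def keyLoad (S : Finset Tx) (k : Key) : ℝ :=
  ∑ tx ∈ S, if k ∈ K tx then t tx else 0

noncomputable def maxKeyLoad (S : Finset Tx) : ℝ :=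
  ⨆ k, keyLoad t K S k

variable {t K}

theorem keyLoad_insert [DecidableEq Tx] {a : Tx} {S : Finset Tx} (ha : a ∉ S) (k : Key) :
    keyLoad t K (insert a S) k = (if k ∈ K a then t a else 0) + keyLoad t K S k :=
  Finset.sum_insert ha

theorem keyLoad_mono (ht : ∀ tx, 0 ≤ t tx) {A B : Finset Tx} (h : A ⊆ B) (k : Key) :
    keyLoad t K A k ≤ keyLoad t K B k :=
  Finset.sum_le_sum_of_subset_of_nonneg h fun tx _ _ => by split_ifs <;> simp [ht tx]

theorem maxKeyLoad_le_of_keyLoad_le [Finite Key] {A B : Finset Tx}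
    (h : ∀ k, keyLoad t K A k ≤ keyLoad t K B k) : maxKeyLoad t K A ≤ maxKeyLoad t K B :=
  ciSup_mono (Set.finite_range _).bddAbove h

theorem maxKeyLoad_mono [Finite Key] (ht : ∀ tx, 0 ≤ t tx) {A B : Finset Tx} (h : A ⊆ B) :
    maxKeyLoad t K A ≤ maxKeyLoad t K B :=
  maxKeyLoad_le_of_keyLoad_le (keyLoad_mono ht h)

theorem maxKeyLoad_empty [Nonempty Key] : maxKeyLoad t K ∅ = 0 := by
  simp [maxKeyLoad, keyLoad]

theorem maxKeyLoad_insert_insert_le_insert [DecidableEq Tx] [Finite Key] (ht : ∀ tx, 0 ≤ t tx)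
    {T : Finset Tx} {a b c : Tx} (ha : a ∉ T) (hb : b ∉ T) (hc : c ∉ T) (hab : a ≠ b)
    (htc : t c = t a + t b) (hKc : K c = K a ∪ K b) :
    maxKeyLoad t K (insert a (insert b T)) ≤ maxKeyLoad t K (insert c T) := by
  refine maxKeyLoad_le_of_keyLoad_le fun k => ?_
  rw [keyLoad_insert (by simp [hab, ha]), keyLoad_insert hb, keyLoad_insert hc, htc, hKc]
  have := ht a
  have := ht b
  by_cases hka : k ∈ K a <;> by_cases hkb : k ∈ K b <;> simp [hka, hkb] <;> linarith

theorem maxKeyLoad_insert_le_insert [DecidableEq Tx] [Finite Key] {T : Finset Tx} {a b : Tx}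
    (ha : a ∉ T) (hb : b ∉ T) (htab : t a ≤ t b) (hKab : K a ⊆ K b) (htb : 0 ≤ t b) :
    maxKeyLoad t K (insert a T) ≤ maxKeyLoad t K (insert b T) := by
  refine maxKeyLoad_le_of_keyLoad_le fun k => ?_
  rw [keyLoad_insert ha, keyLoad_insert hb]
  by_cases hka : k ∈ K a
  · simp [hka, hKab hka, htab]
  · by_cases hkb : k ∈ K b <;> simp [hka, hkb, htb]

end KeyLoad

theorem ciSup_fin_two {α : Type*} [ConditionallyCompleteLattice α] (f : Fin 2 → α) :
    ⨆ i, f i = f 0 ⊔ f 1 :=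
  le_antisymm (ciSup_le (Fin.forall_fin_two.2 ⟨le_sup_left, le_sup_right⟩))
    (sup_le (le_ciSup (Set.finite_range f).bddAbove 0) (le_ciSup (Set.finite_range f).bddAbove 1))

theorem banzhafGas_triple {Tx : Type} [DecidableEq Tx] (v : Finset Tx → ℝ) {a b c : Tx}
    (hab : a ≠ b) (hac : a ≠ c) (hbc : b ≠ c) :
    banzhafGas v {a, b, c} a = ((v {a} - v ∅) + (v {a, b} - v {b}) + (v {a, c} - v {c}) +
      (v {a, b, c} - v {b, c})) / 4 := by
  have hcard : ({a, b, c} : Finset Tx).card = 3 := by simp [hab, hac, hbc]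
  have herase : ({a, b, c} : Finset Tx).erase a = insert b (insert c ∅) := by simp [hab, hac]
  rw [banzhafGas, hcard, herase, Finset.sum_powerset_insert (by simp [hbc]),
    Finset.sum_powerset_insert (Finset.notMem_empty c),
    Finset.sum_powerset_insert (Finset.notMem_empty c), Finset.powerset_empty]
  simp only [Finset.sum_singleton, Finset.insert_empty]
  ring

theorem maxKeyLoad_tTx5_keysTx5 (S : Finset (Fin 3)) :
    maxKeyLoad tTx5 keysTx5 S = if 0 ∈ S ∧ 1 ∈ S then 2 else if S = ∅ then 0 else 1 := by
  fin_cases S <;> simp [maxKeyLoad, keyLoad, ciSup_fin_two, tTx5, keysTx5] <;>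
    first | decide | norm_num [Finset.ext_iff]

/-- The Banzhaf GCM does not satisfy Efficiency: there exists a
makespan function `v` satisfying (S1)–(S4) (values given by the optimal
scheduler on at least 2 threads, so `v` of every nonempty subset not containing
both `tx1` and `tx2` equals 1, `v({tx1,tx2}) = v(T) = 2`, `v(∅) = 0`) for which
the Banzhaf gas values on `T = {tx1, tx2, tx3}` are `3/4, 3/4, 1/4`, summing to
`7/4 ≠ 2 = v(T)`. -/
theorem banzhafGas_not_efficient :
    ∃ v : Finset (Fin 3) → ℝ,
      -- (S1) monotonicity in T
      (∀ A B : Finset (Fin 3), A ⊆ B → v A ≤ v B) ∧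
      -- (S2) monotonicity under bundling
      (∀ (T : Finset (Fin 3)) (a b c : Fin 3), a ∉ T → b ∉ T → c ∉ T → a ≠ b →
        tTx5 c = tTx5 a + tTx5 b → keysTx5 c = keysTx5 a ∪ keysTx5 b →
        v (insert a (insert b T)) ≤ v (insert c T)) ∧
      -- (S3) monotonicity in t and K
      (∀ (T : Finset (Fin 3)) (a b : Fin 3), a ∉ T → b ∉ T →
        tTx5 a ≤ tTx5 b → keysTx5 a ⊆ keysTx5 b →
        v (insert a T) ≤ v (insert b T)) ∧
      -- (S4) empty set
      v ∅ = 0 ∧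
      -- v of every nonempty subset not containing both tx1 and tx2 equals 1
      (∀ S : Finset (Fin 3), S.Nonempty → ¬((0 : Fin 3) ∈ S ∧ (1 : Fin 3) ∈ S) →
        v S = 1) ∧
      v {0, 1} = 2 ∧ v Finset.univ = 2 ∧
      banzhafGas v Finset.univ 0 = 3 / 4 ∧
      banzhafGas v Finset.univ 1 = 3 / 4 ∧
      banzhafGas v Finset.univ 2 = 1 / 4 ∧
      (∑ tx : Fin 3, banzhafGas v Finset.univ tx) = 7 / 4 ∧
      (∑ tx : Fin 3, banzhafGas v Finset.univ tx) ≠ v Finset.univ := by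
  have ht : ∀ tx, 0 ≤ tTx5 tx := fun tx => by fin_cases tx <;> simp [tTx5]
  have gas₀ : banzhafGas (maxKeyLoad tTx5 keysTx5) Finset.univ 0 = 3 / 4 := by
    rw [show (Finset.univ : Finset (Fin 3)) = {0, 1, 2} by decide,
      banzhafGas_triple _ (by decide) (by decide) (by decide)]
    norm_num [maxKeyLoad_tTx5_keysTx5, Fin.ext_iff]
  have gas₁ : banzhafGas (maxKeyLoad tTx5 keysTx5) Finset.univ 1 = 3 / 4 := by
    rw [show (Finset.univ : Finset (Fin 3)) = {1, 0, 2} by decide,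
      banzhafGas_triple _ (by decide) (by decide) (by decide)]
    norm_num [maxKeyLoad_tTx5_keysTx5, Fin.ext_iff]
  have gas₂ : banzhafGas (maxKeyLoad tTx5 keysTx5) Finset.univ 2 = 1 / 4 := by
    rw [show (Finset.univ : Finset (Fin 3)) = {2, 0, 1} by decide,
      banzhafGas_triple _ (by decide) (by decide) (by decide)]
    norm_num [maxKeyLoad_tTx5_keysTx5, Fin.ext_iff]
  have hsum : ∑ tx : Fin 3, banzhafGas (maxKeyLoad tTx5 keysTx5) Finset.univ tx = 7 / 4 := by
    rw [Fin.sum_univ_three, gas₀, gas₁, gas₂]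
    norm_num
  have huniv : maxKeyLoad tTx5 keysTx5 Finset.univ = 2 := by simp [maxKeyLoad_tTx5_keysTx5]
  refine ⟨maxKeyLoad tTx5 keysTx5, fun _ _ => maxKeyLoad_mono ht,
    fun _ _ _ _ ha hb hc hab htc hKc => maxKeyLoad_insert_insert_le_insert ht ha hb hc hab htc hKc,
    fun _ a b ha hb htab hKab => maxKeyLoad_insert_le_insert ha hb htab hKab (ht b),
    maxKeyLoad_empty, fun S hS h => ?_, by simp [maxKeyLoad_tTx5_keysTx5], huniv,
    gas₀, gas₁, gas₂, hsum, by rw [hsum, huniv]; norm_num⟩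
  rw [maxKeyLoad_tTx5_keysTx5, if_neg h, if_neg hS.ne_empty]
end

section
/- The Weighted Area GCM satisfies Transaction Bundling: for transactions tx1 ≃ (t1, K1), tx2 ≃ (t2, K2), and their concatenation tx3 ≃ (t1+t2, K1∪K2), it holds that t1·(1 + Σ_{k∈K1} w_k) + t2·(1 + Σ_{k∈K2} w_k) ≤ (t1+t2)·(1 + Σ_{k∈K1∪K2} w_k). Moreover, the inequality is an equality if and only if K1 = K2; in particular the property holds strictly whenever K1 ≠ K2. -/
/-!
Writing `U = K1 ∪ K2`, the bundled gas splits as `t1 · (1 + Σ_U w) + t2 · (1 + Σ_U w)`, and each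
summand dominates the corresponding unbundled one because `K1, K2 ⊆ U` and the weights are
nonnegative. Equality of the sums forces equality in both summands; since the times and weights
are positive, that means `Σ_{K1} w = Σ_U w = Σ_{K2} w`, hence `K1 = U = K2`.
-/

open Finset

theorem Finset.sum_lt_sum_of_ssubset_of_pos {ι M : Type*} [AddCommMonoid M] [PartialOrder M]
    [IsOrderedCancelAddMonoid M] {w : ι → M} (hw : ∀ k, 0 < w k) {A B : Finset ι} (h : A ⊂ B) :
    ∑ k ∈ A, w k < ∑ k ∈ B, w k := by
  obtain ⟨i, hiB, hiA⟩ := exists_of_ssubset h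
  exact sum_lt_sum_of_subset h.subset hiB hiA (hw i) fun j _ _ => (hw j).le

def weightedAreaGas {Key : Type*} (w : Key → ℝ) (t : ℝ) (K : Finset Key) : ℝ :=
  t * (1 + ∑ k ∈ K, w k)

section WeightedAreaGas

variable {Key : Type*} {w : Key → ℝ} {t : ℝ} {K K' : Finset Key}

theorem weightedAreaGas_add_time (w : Key → ℝ) (t1 t2 : ℝ) (K : Finset Key) :
    weightedAreaGas w (t1 + t2) K = weightedAreaGas w t1 K + weightedAreaGas w t2 K :=
  add_mul t1 t2 _

theorem weightedAreaGas_le_of_subset (hw : ∀ k, 0 ≤ w k) (ht : 0 ≤ t) (h : K ⊆ K') :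
    weightedAreaGas w t K ≤ weightedAreaGas w t K' := by
  unfold weightedAreaGas
  gcongr
  exact fun k _ _ => hw k

theorem weightedAreaGas_lt_of_ssubset (hw : ∀ k, 0 < w k) (ht : 0 < t) (h : K ⊂ K') :
    weightedAreaGas w t K < weightedAreaGas w t K' := by
  unfold weightedAreaGas
  gcongr
  exact sum_lt_sum_of_ssubset_of_pos hw h

theorem weightedAreaGas_eq_iff_of_subset (hw : ∀ k, 0 < w k) (ht : 0 < t) (h : K ⊆ K') :
    weightedAreaGas w t K = weightedAreaGas w t K' ↔ K = K' := by
  refine ⟨fun heq => ?_, fun hKK' => hKK' ▸ rfl⟩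
  by_contra hne
  exact (weightedAreaGas_lt_of_ssubset hw ht (h.ssubset_of_ne hne)).ne heq

variable [DecidableEq Key] {t1 t2 : ℝ} {K1 K2 : Finset Key}

theorem weightedAreaGas_bundling_le (hw : ∀ k, 0 ≤ w k) (ht1 : 0 ≤ t1) (ht2 : 0 ≤ t2) :
    weightedAreaGas w t1 K1 + weightedAreaGas w t2 K2 ≤ weightedAreaGas w (t1 + t2) (K1 ∪ K2) := by
  rw [weightedAreaGas_add_time]
  exact add_le_add (weightedAreaGas_le_of_subset hw ht1 subset_union_left)
    (weightedAreaGas_le_of_subset hw ht2 subset_union_right)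

theorem weightedAreaGas_bundling_eq_iff (hw : ∀ k, 0 < w k) (ht1 : 0 < t1) (ht2 : 0 < t2) :
    weightedAreaGas w t1 K1 + weightedAreaGas w t2 K2 = weightedAreaGas w (t1 + t2) (K1 ∪ K2) ↔
      K1 = K2 := by
  have hw' : ∀ k, 0 ≤ w k := fun k => (hw k).le
  rw [weightedAreaGas_add_time,
    add_eq_add_iff_eq_and_eq (weightedAreaGas_le_of_subset hw' ht1.le subset_union_left)
      (weightedAreaGas_le_of_subset hw' ht2.le subset_union_right),
    weightedAreaGas_eq_iff_of_subset hw ht1 subset_union_left,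
    weightedAreaGas_eq_iff_of_subset hw ht2 subset_union_right, left_eq_union, right_eq_union,
    and_comm, subset_antisymm_iff]

end WeightedAreaGas

theorem weightedArea_transaction_bundling_general
    {Key : Type} [DecidableEq Key]
    (w : Key → ℝ) (hw : ∀ k, 0 < w k)
    (t1 t2 : ℝ) (ht1 : 0 < t1) (ht2 : 0 < t2)
    (K1 K2 : Finset Key) :
    (t1 * (1 + ∑ k ∈ K1, w k) + t2 * (1 + ∑ k ∈ K2, w k)
        ≤ (t1 + t2) * (1 + ∑ k ∈ K1 ∪ K2, w k)) ∧
    ((t1 * (1 + ∑ k ∈ K1, w k) + t2 * (1 + ∑ k ∈ K2, w k)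
        = (t1 + t2) * (1 + ∑ k ∈ K1 ∪ K2, w k)) ↔ K1 = K2) :=
  ⟨weightedAreaGas_bundling_le (fun k => (hw k).le) ht1.le ht2.le,
    weightedAreaGas_bundling_eq_iff hw ht1 ht2⟩

/-- The Weighted Area GCM satisfies Transaction Bundling: for
transactions `tx1 ≃ (t1, K1)`, `tx2 ≃ (t2, K2)` and their concatenation
`tx3 ≃ (t1+t2, K1∪K2)`,
`t1·(1 + Σ_{k∈K1} w_k) + t2·(1 + Σ_{k∈K2} w_k) ≤ (t1+t2)·(1 + Σ_{k∈K1∪K2} w_k)`,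
with equality if and only if `K1 = K2`; in particular the property holds
strictly whenever `K1 ≠ K2`. -/
theorem weightedArea_transaction_bundling
    {Key : Type} [DecidableEq Key]
    (w : Key → ℝ) (hw : ∀ k, 0 < w k)
    (t1 t2 : ℝ) (ht1 : 0 < t1) (ht2 : 0 < t2)
    (K1 K2 : Finset Key) (hK1 : K1.Nonempty) (hK2 : K2.Nonempty) :
    (t1 * (1 + ∑ k ∈ K1, w k) + t2 * (1 + ∑ k ∈ K2, w k)
        ≤ (t1 + t2) * (1 + ∑ k ∈ K1 ∪ K2, w k)) ∧
    ((t1 * (1 + ∑ k ∈ K1, w k) + t2 * (1 + ∑ k ∈ K2, w k)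
        = (t1 + t2) * (1 + ∑ k ∈ K1 ∪ K2, w k)) ↔ K1 = K2) :=
  weightedArea_transaction_bundling_general w hw t1 t2 ht1 ht2 K1 K2
end

section
/- The Banzhaf GCM satisfies Transaction Bundling: for any makespan function v satisfying monotonicity under bundling (S2), any finite set T, and transactions tx1, tx2, tx3 not in T with tx3 the concatenation of tx1 and tx2, it holds that gas^B_{T∪{tx1,tx2}}(tx1) + gas^B_{T∪{tx1,tx2}}(tx2) ≤ gas^B_{T∪{tx3}}(tx3). -/
/-- The Banzhaf GCM satisfies Transaction Bundling: for any
makespan function `v` satisfying monotonicity under bundling (S2), any finite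
set `T`, and transactions `tx1, tx2, tx3 ∉ T` with `tx3` the concatenation of
`tx1` and `tx2`,
`gas^B_{T∪{tx1,tx2}}(tx1) + gas^B_{T∪{tx1,tx2}}(tx2) ≤ gas^B_{T∪{tx3}}(tx3)`. -/
theorem banzhafGas_transaction_bundling
    {Key Tx : Type} [DecidableEq Key] [DecidableEq Tx]
    (t : Tx → ℝ) (keys : Tx → Finset Key)
    (htpos : ∀ tx, 0 < t tx) (hKne : ∀ tx, (keys tx).Nonempty)
    (v : Finset Tx → ℝ)
    -- (S2) monotonicity under bundling
    (hS2 : ∀ (T : Finset Tx) (a b c : Tx), a ∉ T → b ∉ T → c ∉ T → a ≠ b →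
      t c = t a + t b → keys c = keys a ∪ keys b →
      v (insert a (insert b T)) ≤ v (insert c T))
    (T : Finset Tx) (tx1 tx2 tx3 : Tx)
    (h1 : tx1 ∉ T) (h2 : tx2 ∉ T) (h3 : tx3 ∉ T) (h12 : tx1 ≠ tx2)
    -- tx3 is the concatenation of tx1 and tx2
    (hconcT : t tx3 = t tx1 + t tx2) (hconcK : keys tx3 = keys tx1 ∪ keys tx2) :
    banzhafGas v (insert tx1 (insert tx2 T)) tx1
        + banzhafGas v (insert tx1 (insert tx2 T)) tx2
      ≤ banzhafGas v (insert tx3 T) tx3 := by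

  have h13 : tx1 ≠ tx3 := by
    intro h; subst h; have := htpos tx2; linarith
  have h23 : tx2 ≠ tx3 := by
    intro h; subst h; have := htpos tx1; linarith
  have h1' : tx1 ∉ insert tx2 T := by simp [h12, h1]
  have h2' : tx2 ∉ insert tx1 T := by simp [h12.symm, h2]
  have e1 : (insert tx1 (insert tx2 T)).erase tx1 = insert tx2 T :=
    Finset.erase_insert h1'
  have e2 : (insert tx1 (insert tx2 T)).erase tx2 = insert tx1 T := by
    rw [Finset.insert_comm]; exact Finset.erase_insert h2'
  have e3 : (insert tx3 T).erase tx3 = T := Finset.erase_insert h3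
  have c1 : (insert tx1 (insert tx2 T)).card = T.card + 2 := by
    rw [Finset.card_insert_of_notMem h1', Finset.card_insert_of_notMem h2]
  have c3 : (insert tx3 T).card = T.card + 1 :=
    Finset.card_insert_of_notMem h3
  simp only [banzhafGas, e1, e2, e3, c1, c3, Nat.add_sub_cancel]
  rw [Finset.sum_powerset_insert h2, Finset.sum_powerset_insert h1]
  have key : ∑ S ∈ T.powerset, (v (insert tx1 (insert tx2 S)) - v S)
      ≤ ∑ S ∈ T.powerset, (v (insert tx3 S) - v S) := by
    apply Finset.sum_le_sum
    intro S hS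
    have hS' := Finset.mem_powerset.mp hS
    have := hS2 S tx1 tx2 tx3 (fun h => h1 (hS' h)) (fun h => h2 (hS' h))
      (fun h => h3 (hS' h)) h12 hconcT hconcK
    linarith
  have comm : ∑ S ∈ T.powerset, (v (insert tx2 (insert tx1 S)) - v (insert tx1 S))
      = ∑ S ∈ T.powerset, (v (insert tx1 (insert tx2 S)) - v (insert tx1 S)) := by
    apply Finset.sum_congr rfl; intro S _; rw [Finset.insert_comm]
  rw [comm]
  have hpow : (0:ℝ) < 2 ^ T.card := by positivity
  have hsplit : (1 / 2 ^ (T.card + 2 - 1) : ℝ) = (1 / 2 ^ T.card) / 2 := by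
    rw [show T.card + 2 - 1 = T.card + 1 by omega, pow_succ]; ring
  rw [hsplit]
  simp only [Finset.sum_sub_distrib] at key ⊢
  set a := ∑ S ∈ T.powerset, v S
  set b := ∑ S ∈ T.powerset, v (insert tx1 S)
  set c := ∑ S ∈ T.powerset, v (insert tx2 S)
  set d := ∑ S ∈ T.powerset, v (insert tx1 (insert tx2 S))
  set e := ∑ S ∈ T.powerset, v (insert tx3 S)
  have h2pos : (0:ℝ) < 1 / 2 ^ T.card := by positivity
  calc (1 / 2 ^ T.card / 2) * ((b - a) + (d - c)) + (1 / 2 ^ T.card / 2) * ((c - a) + (d - b))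
      = (1 / 2 ^ T.card) * (d - a) := by ring
    _ ≤ (1 / 2 ^ T.card) * (e - a) := by
        apply mul_le_mul_of_nonneg_left _ (le_of_lt h2pos)
        linarith
end

section
/- The TPM GCM satisfies Transaction Bundling: for any makespan function v satisfying monotonicity under bundling (S2), any finite set T, and transactions tx1, tx2, tx3 not in T with tx3 the concatenation of tx1 and tx2, it holds that gas^TPM_{T∪{tx1,tx2}}(tx1) + gas^TPM_{T∪{tx1,tx2}}(tx2) ≤ gas^TPM_{T∪{tx3}}(tx3). -/
/-- The Time-Proportional Makespan (TPM) GCM: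
`gas^TPM_T(tx) = (t(tx)/Σ_{tx'∈T} t(tx')) · v(T)`. -/
noncomputable def tpmGas {Tx : Type} [DecidableEq Tx]
    (t : Tx → ℝ) (v : Finset Tx → ℝ) (T : Finset Tx) (tx : Tx) : ℝ :=
  (t tx / ∑ tx' ∈ T, t tx') * v T

/-! Bundling leaves the total execution time unchanged, so both sides are charged the same
fraction `t(tx3) / Σ t` of a makespan, and (S2) says the bundled makespan is the larger one. -/

theorem tpmGas_add_tpmGas {Tx : Type} [DecidableEq Tx] (t : Tx → ℝ) (v : Finset Tx → ℝ)
    (S : Finset Tx) (a b : Tx) :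
    tpmGas t v S a + tpmGas t v S b = (t a + t b) / (∑ x ∈ S, t x) * v S := by
  rw [tpmGas, tpmGas, ← add_mul, add_div]

theorem Finset.sum_insert_insert_eq_sum_insert {α M : Type*} [DecidableEq α] [AddCommMonoid M]
    {f : α → M} {s : Finset α} {a b c : α} (ha : a ∉ s) (hb : b ∉ s) (hc : c ∉ s) (hab : a ≠ b)
    (hf : f c = f a + f b) :
    ∑ x ∈ insert a (insert b s), f x = ∑ x ∈ insert c s, f x := by
  rw [sum_insert (by simp [ha, hab]), sum_insert hb, sum_insert hc, hf, add_assoc]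

theorem tpmGas_transaction_bundling_general
    {Key Tx : Type} [DecidableEq Key] [DecidableEq Tx]
    (t : Tx → ℝ) (keys : Tx → Finset Key)
    (htpos : ∀ tx, 0 < t tx)
    (v : Finset Tx → ℝ)
    -- (S2) monotonicity under bundling
    (hS2 : ∀ (T : Finset Tx) (a b c : Tx), a ∉ T → b ∉ T → c ∉ T → a ≠ b →
      t c = t a + t b → keys c = keys a ∪ keys b →
      v (insert a (insert b T)) ≤ v (insert c T))
    (T : Finset Tx) (tx1 tx2 tx3 : Tx)
    (h1 : tx1 ∉ T) (h2 : tx2 ∉ T) (h3 : tx3 ∉ T) (h12 : tx1 ≠ tx2)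
    -- tx3 is the concatenation of tx1 and tx2
    (hconcT : t tx3 = t tx1 + t tx2) (hconcK : keys tx3 = keys tx1 ∪ keys tx2) :
    tpmGas t v (insert tx1 (insert tx2 T)) tx1
        + tpmGas t v (insert tx1 (insert tx2 T)) tx2
      ≤ tpmGas t v (insert tx3 T) tx3 := by
  have hsum : ∑ x ∈ insert tx1 (insert tx2 T), t x = ∑ x ∈ insert tx3 T, t x :=
    Finset.sum_insert_insert_eq_sum_insert h1 h2 h3 h12 hconcT
  have hshare : 0 ≤ t tx3 / ∑ x ∈ insert tx3 T, t x :=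
    div_nonneg (htpos tx3).le (Finset.sum_nonneg fun x _ => (htpos x).le)
  calc tpmGas t v (insert tx1 (insert tx2 T)) tx1 + tpmGas t v (insert tx1 (insert tx2 T)) tx2
      = t tx3 / (∑ x ∈ insert tx3 T, t x) * v (insert tx1 (insert tx2 T)) := by
        rw [tpmGas_add_tpmGas, hsum, hconcT]
    _ ≤ t tx3 / (∑ x ∈ insert tx3 T, t x) * v (insert tx3 T) :=
        mul_le_mul_of_nonneg_left (hS2 T tx1 tx2 tx3 h1 h2 h3 h12 hconcT hconcK) hshare
    _ = tpmGas t v (insert tx3 T) tx3 := rfl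

/-- The TPM GCM satisfies Transaction Bundling: for any
nonnegative makespan function `v` satisfying monotonicity under bundling (S2),
any finite set `T`, and transactions `tx1, tx2, tx3 ∉ T` with `tx3` the
concatenation of `tx1` and `tx2`,
`gas^TPM_{T∪{tx1,tx2}}(tx1) + gas^TPM_{T∪{tx1,tx2}}(tx2) ≤ gas^TPM_{T∪{tx3}}(tx3)`. -/
theorem tpmGas_transaction_bundling
    {Key Tx : Type} [DecidableEq Key] [DecidableEq Tx]
    (t : Tx → ℝ) (keys : Tx → Finset Key)
    (htpos : ∀ tx, 0 < t tx) (hKne : ∀ tx, (keys tx).Nonempty)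
    (v : Finset Tx → ℝ) (hvnonneg : ∀ S, 0 ≤ v S)
    -- (S2) monotonicity under bundling
    (hS2 : ∀ (T : Finset Tx) (a b c : Tx), a ∉ T → b ∉ T → c ∉ T → a ≠ b →
      t c = t a + t b → keys c = keys a ∪ keys b →
      v (insert a (insert b T)) ≤ v (insert c T))
    (T : Finset Tx) (tx1 tx2 tx3 : Tx)
    (h1 : tx1 ∉ T) (h2 : tx2 ∉ T) (h3 : tx3 ∉ T) (h12 : tx1 ≠ tx2)
    -- tx3 is the concatenation of tx1 and tx2
    (hconcT : t tx3 = t tx1 + t tx2) (hconcK : keys tx3 = keys tx1 ∪ keys tx2) :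
    tpmGas t v (insert tx1 (insert tx2 T)) tx1
        + tpmGas t v (insert tx1 (insert tx2 T)) tx2
      ≤ tpmGas t v (insert tx3 T) tx3 :=
  tpmGas_transaction_bundling_general t keys htpos v hS2 T tx1 tx2 tx3 h1 h2 h3 h12 hconcT hconcK
end

section
/- The TPM GCM satisfies Set Inclusion: for any makespan function v that is nonnegative and monotone under set inclusion (S1), any finite set T of transactions, and any sets T1 ⊆ T2 of transactions disjoint from T, it holds that gas^TPM_{T∪T1}(T1) ≤ gas^TPM_{T∪T2}(T2). -/
/-- The TPM GCM satisfies Set Inclusion: for any nonnegative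
makespan function `v` monotone under set inclusion (S1), any finite set `T` of
transactions, and any sets `T1 ⊆ T2` of transactions disjoint from `T`,
`gas^TPM_{T∪T1}(T1) ≤ gas^TPM_{T∪T2}(T2)`. -/
theorem tpmGas_set_inclusion
    {Tx : Type} [DecidableEq Tx]
    (t : Tx → ℝ) (htpos : ∀ tx, 0 < t tx)
    (v : Finset Tx → ℝ) (hvnonneg : ∀ S, 0 ≤ v S)
    -- (S1) monotonicity in T
    (hS1 : ∀ A B : Finset Tx, A ⊆ B → v A ≤ v B)
    (T T1 T2 : Finset Tx) (h12 : T1 ⊆ T2) (hdisj : Disjoint T T2) :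
    ∑ tx ∈ T1, tpmGas t v (T ∪ T1) tx ≤ ∑ tx ∈ T2, tpmGas t v (T ∪ T2) tx := by
  classical
  set a := ∑ tx ∈ T, t tx with ha
  set b := ∑ tx ∈ T1, t tx with hb
  set c := ∑ tx ∈ T2, t tx with hc
  have hd1 : Disjoint T T1 := hdisj.mono_right h12
  have hsum1 : ∑ tx ∈ T ∪ T1, t tx = a + b := Finset.sum_union hd1
  have hsum2 : ∑ tx ∈ T ∪ T2, t tx = a + c := Finset.sum_union hdisj
  have hL : ∑ tx ∈ T1, tpmGas t v (T ∪ T1) tx = b / (a + b) * v (T ∪ T1) := by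
    simp only [tpmGas, hsum1, div_mul_eq_mul_div]
    rw [← Finset.sum_div, ← Finset.sum_mul]
  have hR : ∑ tx ∈ T2, tpmGas t v (T ∪ T2) tx = c / (a + c) * v (T ∪ T2) := by
    simp only [tpmGas, hsum2, div_mul_eq_mul_div]
    rw [← Finset.sum_div, ← Finset.sum_mul]
  rw [hL, hR]
  have ha0 : 0 ≤ a := Finset.sum_nonneg fun x _ => (htpos x).le
  have hb0 : 0 ≤ b := Finset.sum_nonneg fun x _ => (htpos x).le
  have hc0 : 0 ≤ c := Finset.sum_nonneg fun x _ => (htpos x).le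
  have hbc : b ≤ c := Finset.sum_le_sum_of_subset_of_nonneg h12
    (fun x _ _ => (htpos x).le)
  have hv12 : v (T ∪ T1) ≤ v (T ∪ T2) :=
    hS1 _ _ (Finset.union_subset_union_right h12)
  rcases eq_or_lt_of_le (by positivity : (0:ℝ) ≤ a + b) with h0 | hpos
  · have hb0' : b = 0 := by linarith
    rw [hb0']
    simp only [zero_div, zero_mul]
    exact mul_nonneg (div_nonneg hc0 (by positivity)) (hvnonneg _)
  · have hpos2 : 0 < a + c := by linarith
    have hfrac : b / (a + b) ≤ c / (a + c) := by
      rw [div_le_div_iff₀ hpos hpos2]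
      nlinarith
    exact mul_le_mul hfrac hv12 (hvnonneg _)
      (div_nonneg hc0 hpos2.le)
end

section
/- The ESM GCM satisfies Set Inclusion: for any makespan function v that is nonnegative and monotone under set inclusion (S1), any finite set T of transactions, and any sets T1 ⊆ T2 of transactions disjoint from T with T1 nonempty, it holds that gas^ESM_{T∪T1}(T1) ≤ gas^ESM_{T∪T2}(T2). -/
/-- The Equally-Split Makespan (ESM) GCM: `gas^ESM_T(tx) = v(T)/|T|`. -/
noncomputable def esmGas {Tx : Type} [DecidableEq Tx]
    (v : Finset Tx → ℝ) (T : Finset Tx) (_tx : Tx) : ℝ :=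
  v T / (T.card : ℝ)

/-!
`gas^ESM_{T∪S}(S)` is the share `|S| / |T ∪ S|` of `v (T ∪ S)`. Both factors grow with `S`: the
makespan by (S1), and the share because enlarging `S` by `k` elements adds `k` to the numerator but
at most `k` to the denominator, which is never smaller than the numerator.
-/

open Finset

theorem sum_esmGas {Tx : Type} [DecidableEq Tx] (v : Finset Tx → ℝ) (U S : Finset Tx) :
    ∑ tx ∈ S, esmGas v U tx = (#S / #U : ℝ) * v U := by
  simp only [esmGas, sum_const, nsmul_eq_mul]
  ring

theorem card_union_add_card_le_of_subset {α : Type*} [DecidableEq α] (T : Finset α)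
    {S₁ S₂ : Finset α} (h : S₁ ⊆ S₂) : #(T ∪ S₂) + #S₁ ≤ #(T ∪ S₁) + #S₂ := by
  have hcover : T ∪ S₂ ⊆ (T ∪ S₁) ∪ (S₂ \ S₁) := by
    intro x
    simp only [mem_union, mem_sdiff]
    tauto
  have := (card_le_card hcover).trans (card_union_le _ _)
  have := card_sdiff_add_card_eq_card h
  omega

theorem card_div_card_union_mono {α : Type*} [DecidableEq α] (T : Finset α)
    {S₁ S₂ : Finset α} (h : S₁ ⊆ S₂) :
    (#S₁ / #(T ∪ S₁) : ℝ) ≤ #S₂ / #(T ∪ S₂) := by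
  rcases S₁.eq_empty_or_nonempty with rfl | hS₁
  · simp only [card_empty, CharP.cast_eq_zero, zero_div]
    positivity
  have hpos₁ : (0 : ℝ) < #(T ∪ S₁) := by
    exact_mod_cast card_pos.mpr (hS₁.mono subset_union_right)
  have hpos₂ : (0 : ℝ) < #(T ∪ S₂) := by
    exact_mod_cast card_pos.mpr ((hS₁.mono h).mono subset_union_right)
  have hgrowth : (#(T ∪ S₂) + #S₁ : ℝ) ≤ #(T ∪ S₁) + #S₂ := by
    exact_mod_cast card_union_add_card_le_of_subset T h
  have hnum : (#S₁ : ℝ) ≤ #S₂ := by exact_mod_cast card_le_card h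
  have hshare : (#S₁ : ℝ) ≤ #(T ∪ S₁) := by exact_mod_cast card_le_card subset_union_right
  rw [div_le_div_iff₀ hpos₁ hpos₂]
  nlinarith [mul_nonneg (sub_nonneg.mpr hnum) (sub_nonneg.mpr hshare)]

theorem esmGas_set_inclusion_general
    {Tx : Type} [DecidableEq Tx]
    (v : Finset Tx → ℝ) (hvnonneg : ∀ S, 0 ≤ v S)
    -- (S1) monotonicity in T
    (hS1 : ∀ A B : Finset Tx, A ⊆ B → v A ≤ v B)
    (T T1 T2 : Finset Tx) (h12 : T1 ⊆ T2) :
    ∑ tx ∈ T1, esmGas v (T ∪ T1) tx ≤ ∑ tx ∈ T2, esmGas v (T ∪ T2) tx := by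
  rw [sum_esmGas, sum_esmGas]
  exact mul_le_mul (card_div_card_union_mono T h12) (hS1 _ _ (union_subset_union_right h12))
    (hvnonneg _) (by positivity)

/-- The ESM GCM satisfies Set Inclusion: for any nonnegative
makespan function `v` monotone under set inclusion (S1), any finite set `T` of
transactions, and any sets `T1 ⊆ T2` of transactions disjoint from `T` with
`T1` nonempty, `gas^ESM_{T∪T1}(T1) ≤ gas^ESM_{T∪T2}(T2)`. -/
theorem esmGas_set_inclusion
    {Tx : Type} [DecidableEq Tx]
    (v : Finset Tx → ℝ) (hvnonneg : ∀ S, 0 ≤ v S)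
    -- (S1) monotonicity in T
    (hS1 : ∀ A B : Finset Tx, A ⊆ B → v A ≤ v B)
    (T T1 T2 : Finset Tx) (h12 : T1 ⊆ T2) (hdisj : Disjoint T T2)
    (hT1 : T1.Nonempty) :
    ∑ tx ∈ T1, esmGas v (T ∪ T1) tx ≤ ∑ tx ∈ T2, esmGas v (T ∪ T2) tx :=
  esmGas_set_inclusion_general v hvnonneg hS1 T T1 T2 h12
end
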